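/- Let (T,w) be a finite tree with positive integer vertex weights, let v ∈ V(T) with w(v) = 1, and let T₁,…,Tₘ be a maximal set of pairwise symmetric branches of T at v. Let (T',w') be the single concentration of T at v: T' = T − (V(T₂) ∪ ⋯ ∪ V(Tₘ)), with w'(x) = m·w(x) for x ∈ V(T₁) and w'(x) = w(x) otherwise. Then th₊(T,w) = th₊(T',w'). -/

import Mathlib

open SimpleGraph

/-- `v` PSD-forces `w` given blue set `B`: `v` is blue, adjacent to the white vertex `w`,
and `w` is the only white neighbor of `v` in the component of `G - B` containing `w`. -/
def psdForces {V : Type*} (G : SimpleGraph V) (B : Set V) (v w : V) : Prop :=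
  v ∈ B ∧ G.Adj v w ∧ ∃ hw : w ∉ B,
    ∀ (u : V) (hu : u ∉ B), G.Adj v u →
      (G.induce {x | x ∉ B}).Reachable ⟨u, hu⟩ ⟨w, hw⟩ → u = w

/-- One time-step of PSD forcing: all forceable white vertices become blue simultaneously. -/
def psdStep {V : Type*} (G : SimpleGraph V) (B : Set V) : Set V :=
  B ∪ {w | ∃ v, psdForces G B v w}

/-- `B` is a PSD-forcing set of `G` if iterating the PSD color change rule colors all of `V`. -/
def IsPSDForcing {V : Type*} (G : SimpleGraph V) (B : Set V) : Prop :=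
  ∃ t, (psdStep G)^[t] B = Set.univ

/-- The PSD-propagation time of `B` in `G`. -/
noncomputable def psdPt {V : Type*} (G : SimpleGraph V) (B : Set V) : ℕ :=
  sInf {t | (psdStep G)^[t] B = Set.univ}

/-- The PSD-throttling number of `G`. -/
noncomputable def psdTh {V : Type*} (G : SimpleGraph V) : ℕ :=
  sInf {k | ∃ B : Finset V, IsPSDForcing G ↑B ∧ k = B.card + psdPt G ↑B}

/-- The weighted PSD-throttling number of `(G, w)`. -/
noncomputable def psdThW {V : Type*} (G : SimpleGraph V) (w : V → ℕ) : ℕ :=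
  sInf {k | ∃ B : Finset V, IsPSDForcing G ↑B ∧ k = (∑ x ∈ B, w x) + psdPt G ↑B}

/-- The spider `S(l₀, …, l_{k-1})`: a center vertex `none` adjacent to the first vertex
of each of `k` disjoint paths, the `i`-th of order `l i`. -/
def spider (k : ℕ) (l : Fin k → ℕ) : SimpleGraph (Option ((i : Fin k) × Fin (l i))) :=
  SimpleGraph.fromRel (fun x y =>
    (∃ (i : Fin k) (j : Fin (l i)), (j : ℕ) = 0 ∧ x = none ∧ y = some ⟨i, j⟩) ∨
    (∃ (i : Fin k) (j j' : Fin (l i)), (j' : ℕ) = (j : ℕ) + 1 ∧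
      x = some ⟨i, j⟩ ∧ y = some ⟨i, j'⟩))

/-- The balanced spider `T_{α,β}` with `α` legs each of order `β`. -/
abbrev balancedSpider (α β : ℕ) : SimpleGraph (Option ((_ : Fin α) × Fin β)) :=
  spider α (fun _ => β)


/-- `C` is a branch of `T` at `v`, i.e. the vertex set of a connected component of `T - v`. -/
def IsBranch {V : Type*} (T : SimpleGraph V) (v : V) (C : Set V) : Prop :=
  ∃ K : (T.induce {x | x ≠ v}).ConnectedComponent, C = Subtype.val '' K.supp

/-- `σ` is a symmetry map between the branches `C` and `D` of the weighted tree `(T, w)`: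
an automorphism of `T` fixing every vertex outside `C ∪ D`, exchanging `C` and `D`,
and preserving the weights. -/
def IsSymmetryMap {V : Type*} (T : SimpleGraph V) (w : V → ℕ) (C D : Set V)
    (σ : T ≃g T) : Prop :=
  (∀ x : V, x ∉ C ∪ D → σ x = x) ∧ ⇑σ '' C = D ∧ ⇑σ '' D = C ∧ ∀ x ∈ C, w (σ x) = w x


/-!
Let `S` be the vertex set of the concentration `T'`. Every edge leaving `S` passes through `v`,
so as long as `v` is never forced *only* from outside `S`, the PSD process on `T` restricted to
`S` is exactly the PSD process on `T[S]`.

Given a PSD-forcing set `B'` of `T'`, copy its part in `T₁` into every symmetric branch. The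
result is invariant under the symmetries and costs `w'(B')`; any force of `v` from a branch `Tᵢ`
is mirrored by a force from `T₁`, so the copy colors `T` as fast as `B'` colors `T'`.

Conversely let `B` be optimal for `T`, and `τⱼ` the involution exchanging `T₁` and `Tⱼ`. The
traces on `S` of the sets `τⱼ(B)` have `w'`-weights averaging `w(B)`. If one of them is below
average, there is room to add `v` (as `w(v) = 1`) and `v` is blue from the start; otherwise all
are equal to `w(B)`, and choosing `j` so that `τⱼ` moves the vertex that forced `v` into `T₁`
makes `v` forced from within `S`.
-/

section Forcing

variable {V : Type*} {G : SimpleGraph V} {B D : Set V} {u x : V}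

theorem psdForces.mono (hBD : B ⊆ D) (hf : psdForces G B u x) (hx : x ∉ D) :
    psdForces G D u x := by
  obtain ⟨hu, hadj, _, hunique⟩ := hf
  refine ⟨hBD hu, hadj, hx, fun y hy hvy hreach => hunique y (fun h => hy (hBD h)) hvy ?_⟩
  exact hreach.map (induceHom (s := {z | z ∉ D}) (t := {z | z ∉ B}) Hom.id
    fun _ hz h => hz (hBD h))

theorem subset_psdStep (B : Set V) : B ⊆ psdStep G B := Set.subset_union_left

theorem psdStep_mono : Monotone (psdStep G) := by
  rintro B D hBD x (hx | ⟨u, hu⟩)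
  · exact subset_psdStep D (hBD hx)
  · by_cases hxD : x ∈ D
    · exact subset_psdStep D hxD
    · exact Or.inr ⟨u, hu.mono hBD hxD⟩

theorem psdStep_iterate_mono (B : Set V) : Monotone fun t => (psdStep G)^[t] B :=
  Monotone.monotone_iterate_of_le_map psdStep_mono (subset_psdStep B)

theorem psdPt_le {t : ℕ} (h : (psdStep G)^[t] B = Set.univ) : psdPt G B ≤ t :=
  Nat.sInf_le h

theorem psdStep_iterate_psdPt (hB : IsPSDForcing G B) :
    (psdStep G)^[psdPt G B] B = Set.univ :=
  Nat.sInf_mem hB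

theorem IsPSDForcing.mono (hBD : B ⊆ D) (hB : IsPSDForcing G B) : IsPSDForcing G D := by
  obtain ⟨t, ht⟩ := hB
  exact ⟨t, Set.eq_univ_of_univ_subset (ht ▸ psdStep_mono.iterate t hBD)⟩

theorem psdPt_anti (hBD : B ⊆ D) (hB : IsPSDForcing G B) : psdPt G D ≤ psdPt G B :=
  psdPt_le <| Set.eq_univ_of_univ_subset <|
    psdStep_iterate_psdPt hB ▸ psdStep_mono.iterate _ hBD

theorem psdForces_iterate_unique {s t : ℕ} {u' : V}
    (hs : psdForces G ((psdStep G)^[s] B) u x) (ht : psdForces G ((psdStep G)^[t] B) u' x) :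
    s = t := by
  have forced_after {r : ℕ} {y : V} (h : psdForces G ((psdStep G)^[r] B) y x) :
      x ∈ (psdStep G)^[r + 1] B := by
    rw [Function.iterate_succ_apply']
    exact Or.inr ⟨y, h⟩
  by_contra hst
  rcases Nat.lt_or_gt_of_ne hst with h | h
  · exact ht.2.2.1 (psdStep_iterate_mono B h (forced_after hs))
  · exact hs.2.2.1 (psdStep_iterate_mono B h (forced_after ht))

theorem psdThW_le (w : V → ℕ) {B : Finset V} (hB : IsPSDForcing G ↑B) :
    psdThW G w ≤ ∑ x ∈ B, w x + psdPt G ↑B :=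
  Nat.sInf_le ⟨B, hB, rfl⟩

theorem exists_eq_psdThW [Fintype V] (G : SimpleGraph V) (w : V → ℕ) :
    ∃ B : Finset V, IsPSDForcing G ↑B ∧ psdThW G w = ∑ x ∈ B, w x + psdPt G ↑B :=
  Nat.sInf_mem (s := {k | ∃ B : Finset V, IsPSDForcing G ↑B ∧ k = ∑ x ∈ B, w x + psdPt G ↑B})
    ⟨_, Finset.univ, ⟨0, by simp⟩, rfl⟩

end Forcing

section Automorphism

variable {V : Type*} {G : SimpleGraph V} {B : Set V} {u x : V}

theorem psdForces.image (φ : G ≃g G) (hf : psdForces G B u x) :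
    psdForces G (φ '' B) (φ u) (φ x) := by
  obtain ⟨hu, hadj, hx, hunique⟩ := hf
  have mem_image (y : V) : y ∈ φ '' B ↔ φ.symm y ∈ B :=
    ⟨by rintro ⟨z, hz, rfl⟩; simpa using hz, fun h => ⟨_, h, by simp⟩⟩
  refine ⟨Set.mem_image_of_mem φ hu, φ.map_adj_iff.mpr hadj, by simpa [mem_image] using hx,
    fun y hy hφy hreach => ?_⟩
  have hy' : φ.symm y ∉ B := by rwa [← mem_image]
  let ψ := induceHom (s := {z | z ∉ φ '' B}) (t := {z | z ∉ B}) φ.symm.toHom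
    fun z hz => (mem_image z).not.mp hz
  have hψx : ψ ⟨φ x, by simpa [mem_image] using hx⟩ = ⟨x, hx⟩ :=
    Subtype.ext (φ.symm_apply_apply x)
  have := hunique (φ.symm y) hy' (by simpa using φ.symm.map_adj_iff.mpr hφy)
    (hψx ▸ hreach.map ψ)
  simpa using congrArg φ this

theorem psdStep_image (φ : G ≃g G) (B : Set V) : psdStep G (φ '' B) = φ '' psdStep G B := by
  have image_symm_image : φ.symm '' (φ '' B) = B := by
    rw [Set.image_image]; simp
  ext y
  constructor
  · rintro (hy | ⟨u, hu⟩)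
    · exact Set.image_mono (subset_psdStep B) hy
    · refine ⟨φ.symm y, Or.inr ⟨φ.symm u, ?_⟩, by simp⟩
      simpa only [image_symm_image] using hu.image φ.symm
  · rintro ⟨x, hx | ⟨u, hu⟩, rfl⟩
    · exact Or.inl (Set.mem_image_of_mem φ hx)
    · exact Or.inr ⟨φ u, hu.image φ⟩

theorem psdStep_iterate_image (φ : G ≃g G) (B : Set V) (t : ℕ) :
    (psdStep G)^[t] (φ '' B) = φ '' (psdStep G)^[t] B := by
  induction t with
  | zero => rfl
  | succ t ih => rw [Function.iterate_succ_apply', Function.iterate_succ_apply', ih, psdStep_image]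

theorem psdStep_iterate_image_eq_univ_iff (φ : G ≃g G) (B : Set V) (t : ℕ) :
    (psdStep G)^[t] (φ '' B) = Set.univ ↔ (psdStep G)^[t] B = Set.univ := by
  rw [psdStep_iterate_image]
  constructor
  · intro h
    rw [← Set.preimage_image_eq ((psdStep G)^[t] B) φ.injective, h, Set.preimage_univ]
  · intro h
    rw [h, Set.image_univ, φ.surjective.range_eq]

theorem isPSDForcing_image_iff (φ : G ≃g G) : IsPSDForcing G (φ '' B) ↔ IsPSDForcing G B :=
  exists_congr fun t => psdStep_iterate_image_eq_univ_iff φ B t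

theorem psdPt_image (φ : G ≃g G) (B : Set V) : psdPt G (φ '' B) = psdPt G B := by
  simp only [psdPt, psdStep_iterate_image_eq_univ_iff]

end Automorphism

section Restriction

variable {V : Type*} {G : SimpleGraph V} {S : Set V} {v : V}

theorem SimpleGraph.Walk.vertex_mem_support_of_exit
    (hS : ∀ ⦃x y⦄, x ∉ S → G.Adj x y → y ∈ S → y = v) {a b : V} (p : G.Walk a b)
    (ha : a ∈ S) (hb : b ∉ S) : v ∈ p.support := by
  induction p with
  | nil => exact absurd ha hb
  | @cons a c b hac q ih =>
    by_cases hc : c ∈ S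
    · exact List.mem_cons_of_mem _ (ih hc hb)
    · rw [Walk.support_cons, ← hS hc hac.symm ha]
      exact List.mem_cons_self

/-- A path leaving `S` and coming back would pass through `v` twice. -/
theorem SimpleGraph.Walk.IsPath.support_subset_of_single_entrance [DecidableEq V]
    (hS : ∀ ⦃x y⦄, x ∉ S → G.Adj x y → y ∈ S → y = v) (hvS : v ∈ S)
    {a b : V} {p : G.Walk a b} (hp : p.IsPath) (ha : a ∈ S) (hb : b ∈ S) :
    ∀ x ∈ p.support, x ∈ S := by
  intro x hx
  by_contra hxS
  have hv_take : v ∈ (p.takeUntil x hx).support :=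
    (p.takeUntil x hx).vertex_mem_support_of_exit hS ha hxS
  have hv_drop : v ∈ (p.dropUntil x hx).support.tail := by
    have := (p.dropUntil x hx).reverse.vertex_mem_support_of_exit hS hb hxS
    rw [Walk.support_reverse, List.mem_reverse, ← Walk.cons_tail_support] at this
    exact (List.mem_cons.mp this).resolve_left fun h => hxS (h ▸ hvS)
  have hnodup := hp.support_nodup
  rw [← p.take_spec hx, Walk.support_append, List.nodup_append] at hnodup
  exact hnodup.2.2 v hv_take v hv_drop rfl

theorem reachable_induce_compl_iff (hS : ∀ ⦃x y⦄, x ∉ S → G.Adj x y → y ∈ S → y = v)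
    (hvS : v ∈ S) {B : Set V} {a b : V} (ha : a ∈ S) (hb : b ∈ S) (haB : a ∉ B) (hbB : b ∉ B) :
    (G.induce {x | x ∉ B}).Reachable ⟨a, haB⟩ ⟨b, hbB⟩ ↔
      ((G.induce S).induce {x | x ∉ Subtype.val ⁻¹' B}).Reachable
        ⟨⟨a, ha⟩, haB⟩ ⟨⟨b, hb⟩, hbB⟩ := by
  classical
  constructor
  · rintro ⟨p⟩
    obtain ⟨q, hq, hqB⟩ : ∃ q : G.Walk a b, q.IsPath ∧ ∀ x ∈ q.support, x ∉ B := by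
      refine ⟨(p.map (Embedding.induce _).toHom).bypass, Walk.bypass_isPath _, fun x hx => ?_⟩
      obtain ⟨y, -, rfl⟩ := List.mem_map.mp
        (Walk.support_map _ p ▸ Walk.support_bypass_subset_support _ hx)
      exact y.2
    have hqS := hq.support_subset_of_single_entrance hS hvS ha hb
    have hqB' : ∀ x ∈ (q.induce S hqS).support, x ∈ {x | x ∉ Subtype.val ⁻¹' B} := by
      intro x hx
      rw [Walk.support_induce, List.mem_attachWith] at hx
      exact hqB x hx
    exact ((q.induce S hqS).induce _ hqB').reachable
  · exact fun h => h.map (induceHom (s := {x | x ∉ Subtype.val ⁻¹' B}) (t := {x | x ∉ B})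
      (Embedding.induce S).toHom fun _ hx => hx)

theorem psdForces_induce_iff (hS : ∀ ⦃x y⦄, x ∉ S → G.Adj x y → y ∈ S → y = v) (hvS : v ∈ S)
    {B : Set V} {u x : V} (hu : u ∈ S) (hx : x ∈ S) :
    psdForces G B u x ↔ psdForces (G.induce S) (Subtype.val ⁻¹' B) ⟨u, hu⟩ ⟨x, hx⟩ := by
  constructor
  · rintro ⟨huB, hadj, hxB, hunique⟩
    refine ⟨huB, hadj, hxB, fun ⟨y, hy⟩ hyB hadj' hreach => Subtype.ext ?_⟩
    exact hunique y hyB hadj' ((reachable_induce_compl_iff hS hvS hy hx hyB hxB).mpr hreach)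
  · rintro ⟨huB, hadj, hxB, hunique⟩
    refine ⟨huB, hadj, hxB, fun y hyB hadj' hreach => ?_⟩
    by_cases hy : y ∈ S
    · exact congrArg Subtype.val (hunique ⟨y, hy⟩ hyB hadj'
        ((reachable_induce_compl_iff hS hvS hy hx hyB hxB).mp hreach))
    · -- `y` can only be adjacent to `u ∈ S` if `u = v`, but then `v` is blue and separates
      -- the white vertex `y` from `x`.
      have huv : u = v := hS hy hadj'.symm hu
      obtain ⟨p⟩ := hreach
      have hv := ((p.map (Embedding.induce _).toHom).reverse).vertex_mem_support_of_exit hS hx hy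
      rw [Walk.support_reverse, List.mem_reverse, Walk.support_map] at hv
      obtain ⟨z, -, hz⟩ := List.mem_map.mp hv
      exact absurd (huv ▸ huB : v ∈ B) (hz ▸ z.2)

def ForcedFromWithin (G : SimpleGraph V) (B S : Set V) (v : V) : Prop :=
  ∀ t u, psdForces G ((psdStep G)^[t] B) u v → ∃ u' ∈ S, psdForces G ((psdStep G)^[t] B) u' v

theorem preimage_psdStep (hS : ∀ ⦃x y⦄, x ∉ S → G.Adj x y → y ∈ S → y = v) (hvS : v ∈ S)
    {B : Set V} (hB : ∀ u, psdForces G B u v → ∃ u' ∈ S, psdForces G B u' v) :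
    Subtype.val ⁻¹' psdStep G B = psdStep (G.induce S) (Subtype.val ⁻¹' B) := by
  ext ⟨x, hx⟩
  constructor
  · rintro (hxB | ⟨u, hu⟩)
    · exact Or.inl hxB
    · obtain ⟨u', hu'S, hu'⟩ : ∃ u' ∈ S, psdForces G B u' x := by
        by_cases hxv : x = v
        · exact hxv ▸ hB u (hxv ▸ hu)
        · exact ⟨u, by_contra fun huS => hxv (hS huS hu.2.1 hx), hu⟩
      exact Or.inr ⟨⟨u', hu'S⟩, (psdForces_induce_iff hS hvS hu'S hx).mp hu'⟩
  · rintro (hxB | ⟨⟨u, hu⟩, hf⟩)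
    · exact Or.inl hxB
    · exact Or.inr ⟨u, (psdForces_induce_iff hS hvS hu hx).mpr hf⟩

theorem preimage_psdStep_iterate (hS : ∀ ⦃x y⦄, x ∉ S → G.Adj x y → y ∈ S → y = v)
    (hvS : v ∈ S) {B : Set V} (hB : ForcedFromWithin G B S v) (t : ℕ) :
    Subtype.val ⁻¹' (psdStep G)^[t] B = (psdStep (G.induce S))^[t] (Subtype.val ⁻¹' B) := by
  induction t with
  | zero => rfl
  | succ t ih =>
    rw [Function.iterate_succ_apply', Function.iterate_succ_apply', ← ih]
    exact preimage_psdStep hS hvS (hB t)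

theorem forcedFromWithin_of_mem {B : Set V} (hv : v ∈ B) : ForcedFromWithin G B S v :=
  fun t _ hu => absurd (psdStep_iterate_mono B (Nat.zero_le t) hv) hu.2.2.1

theorem psdThW_induce_le [DecidablePred (· ∈ S)]
    (hS : ∀ ⦃x y⦄, x ∉ S → G.Adj x y → y ∈ S → y = v) (hvS : v ∈ S) (w : V → ℕ)
    {D : Finset V} (hD : IsPSDForcing G ↑D) (hF : ForcedFromWithin G ↑D S v) :
    psdThW (G.induce S) (fun x => w x) ≤ ∑ x ∈ D.filter (· ∈ S), w x + psdPt G ↑D := by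
  have hcoe : (↑(D.subtype (· ∈ S)) : Set S) = Subtype.val ⁻¹' ↑D := by ext; simp
  have huniv : (psdStep (G.induce S))^[psdPt G ↑D] ↑(D.subtype (· ∈ S)) = Set.univ := by
    rw [hcoe, ← preimage_psdStep_iterate hS hvS hF, psdStep_iterate_psdPt hD, Set.preimage_univ]
  calc psdThW (G.induce S) (fun x => w x)
      ≤ ∑ x ∈ D.subtype (· ∈ S), w x + psdPt (G.induce S) ↑(D.subtype (· ∈ S)) :=
        psdThW_le _ ⟨_, huniv⟩
    _ ≤ ∑ x ∈ D.filter (· ∈ S), w x + psdPt G ↑D := by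
        rw [Finset.sum_subtype_eq_sum_filter]
        exact Nat.add_le_add_left (psdPt_le huniv) _

end Restriction

section Branches

variable {V : Type*} {G : SimpleGraph V} {v x y : V} {C D : Set V}

theorem IsBranch.vertex_notMem (hC : IsBranch G v C) : v ∉ C := by
  obtain ⟨K, rfl⟩ := hC
  rintro ⟨a, -, ha⟩
  exact a.2 ha

theorem IsBranch.mem_of_adj (hC : IsBranch G v C) (hx : x ∈ C) (hxy : G.Adj x y) (hy : y ≠ v) :
    y ∈ C := by
  obtain ⟨K, rfl⟩ := hC
  obtain ⟨a, ha, rfl⟩ := hx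
  refine ⟨⟨y, hy⟩, ?_, rfl⟩
  rw [ConnectedComponent.mem_supp_iff] at ha ⊢
  rw [← ha]
  exact ConnectedComponent.connectedComponentMk_eq_of_adj (G := G.induce {x | x ≠ v}) hxy.symm

theorem IsBranch.disjoint (hC : IsBranch G v C) (hD : IsBranch G v D) (hCD : C ≠ D) :
    Disjoint C D := by
  obtain ⟨K, rfl⟩ := hC
  obtain ⟨L, rfl⟩ := hD
  rw [Set.disjoint_left]
  rintro _ ⟨a, ha, rfl⟩ ⟨b, hb, hab⟩
  obtain rfl : a = b := Subtype.ext hab.symm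
  rw [ConnectedComponent.mem_supp_iff] at ha hb
  exact hCD (by rw [← ha, ← hb])

end Branches

section Swap

variable {V : Type*} {G : SimpleGraph V} {w : V → ℕ} {C D : Set V} {σ : G ≃g G} {x : V}

open Classical in
/-- The involution built from a symmetry map `σ` between `C` and `D`, which itself need not be
one. -/
noncomputable def symmetrySwap (σ : G ≃g G) (C D : Set V) (x : V) : V :=
  if x ∈ C then σ x else if x ∈ D then σ.symm x else x

namespace IsSymmetryMap

theorem apply_mem (hσ : IsSymmetryMap G w C D σ) (hx : x ∈ C) : σ x ∈ D :=
  hσ.2.1 ▸ Set.mem_image_of_mem σ hx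

theorem symm_apply_mem (hσ : IsSymmetryMap G w C D σ) (hx : x ∈ D) : σ.symm x ∈ C := by
  obtain ⟨y, hy, rfl⟩ := hσ.2.1 ▸ hx
  simpa using hy

theorem symm_apply_eq_self (hσ : IsSymmetryMap G w C D σ) (hC : x ∉ C) (hD : x ∉ D) :
    σ.symm x = x :=
  σ.symm_apply_eq.mpr (hσ.1 x (by simp [hC, hD])).symm

theorem symmetrySwap_of_notMem_right (hσ : IsSymmetryMap G w C D σ) (hx : x ∉ D) :
    symmetrySwap σ C D x = σ x := by
  by_cases hxC : x ∈ C
  · simp [symmetrySwap, hxC]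
  · simp [symmetrySwap, hxC, hx, hσ.1 x (by simp [hxC, hx])]

theorem symmetrySwap_of_notMem_left (hσ : IsSymmetryMap G w C D σ) (hx : x ∉ C) :
    symmetrySwap σ C D x = σ.symm x := by
  by_cases hxD : x ∈ D
  · simp [symmetrySwap, hx, hxD]
  · simp [symmetrySwap, hx, hxD, hσ.symm_apply_eq_self hx hxD]

theorem symmetrySwap_involutive (hσ : IsSymmetryMap G w C D σ) (hCD : Disjoint C D) :
    Function.Involutive (symmetrySwap σ C D) := by
  intro x
  by_cases hxC : x ∈ C
  · rw [hσ.symmetrySwap_of_notMem_right (Set.disjoint_left.mp hCD hxC),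
      hσ.symmetrySwap_of_notMem_left (Set.disjoint_right.mp hCD (hσ.apply_mem hxC)),
      σ.symm_apply_apply]
  · rw [hσ.symmetrySwap_of_notMem_left hxC]
    by_cases hxD : x ∈ D
    · rw [hσ.symmetrySwap_of_notMem_right (Set.disjoint_left.mp hCD (hσ.symm_apply_mem hxD)),
        σ.apply_symm_apply]
    · rw [hσ.symm_apply_eq_self hxC hxD, hσ.symmetrySwap_of_notMem_left hxC,
        hσ.symm_apply_eq_self hxC hxD]

/-- Without edges between `C` and `D`, every edge lies in `Dᶜ`, where the swap agrees with `σ`,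
or in `Cᶜ`, where it agrees with `σ⁻¹`. -/
theorem adj_symmetrySwap (hσ : IsSymmetryMap G w C D σ) (hCD : Disjoint C D)
    (hnadj : ∀ x ∈ C, ∀ y ∈ D, ¬G.Adj x y) {a b : V} (hab : G.Adj a b) :
    G.Adj (symmetrySwap σ C D a) (symmetrySwap σ C D b) := by
  by_cases hD : a ∈ D ∨ b ∈ D
  · have haC : a ∉ C := fun haC => hD.elim (Set.disjoint_left.mp hCD haC) (hnadj a haC b · hab)
    have hbC : b ∉ C := fun hbC =>
      hD.elim (fun haD => hnadj b hbC a haD hab.symm) (Set.disjoint_left.mp hCD hbC)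
    rw [hσ.symmetrySwap_of_notMem_left haC, hσ.symmetrySwap_of_notMem_left hbC]
    exact σ.symm.map_adj_iff.mpr hab
  · rw [not_or] at hD
    rw [hσ.symmetrySwap_of_notMem_right hD.1, hσ.symmetrySwap_of_notMem_right hD.2]
    exact σ.map_adj_iff.mpr hab

theorem exists_involutive (hσ : IsSymmetryMap G w C D σ) (hCD : Disjoint C D)
    (hnadj : ∀ x ∈ C, ∀ y ∈ D, ¬G.Adj x y) :
    ∃ φ : G ≃g G, Function.Involutive φ ∧ φ '' C = D ∧ (∀ x, x ∉ C → x ∉ D → φ x = x) ∧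
      ∀ x, w (φ x) = w x := by
  have hinv := hσ.symmetrySwap_involutive hCD
  have hadj (a b : V) : G.Adj (symmetrySwap σ C D a) (symmetrySwap σ C D b) ↔ G.Adj a b :=
    ⟨fun h => hinv a ▸ hinv b ▸ hσ.adj_symmetrySwap hCD hnadj h,
      hσ.adj_symmetrySwap hCD hnadj⟩
  refine ⟨⟨hinv.toPerm, hadj _ _⟩, hinv, ?_,
    fun x hxC hxD => show symmetrySwap σ C D x = x by simp [symmetrySwap, hxC, hxD], fun x => ?_⟩
  · ext y
    refine ⟨?_, fun hy => ⟨σ.symm y, hσ.symm_apply_mem hy, ?_⟩⟩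
    · rintro ⟨x, hx, rfl⟩
      change symmetrySwap σ C D x ∈ D
      rw [hσ.symmetrySwap_of_notMem_right (Set.disjoint_left.mp hCD hx)]
      exact hσ.apply_mem hx
    · change symmetrySwap σ C D _ = y
      simp [symmetrySwap, hσ.symm_apply_mem hy]
  · change w (symmetrySwap σ C D x) = w x
    by_cases hxC : x ∈ C
    · simp [symmetrySwap, hxC, hσ.2.2.2 x hxC]
    · by_cases hxD : x ∈ D
      · rw [hσ.symmetrySwap_of_notMem_left hxC]
        simpa using (hσ.2.2.2 _ (hσ.symm_apply_mem hxD)).symm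
      · simp [symmetrySwap, hxC, hxD]

end IsSymmetryMap

end Swap

section Concentration

variable {V ι : Type*} {G : SimpleGraph V} {w : V → ℕ} {v : V} {i₀ : ι} {C : ι → Set V}
  {τ : ι → G ≃g G}

/-- The vertex set of the single concentration `T'`. -/
def concentrationCore (C : ι → Set V) (i₀ : ι) : Set V := {x | ∀ i, i ≠ i₀ → x ∉ C i}

open Classical in
/-- The weight `w'` of `T'`, with `m = |ι|`. -/
noncomputable def concentratedWeight [Fintype ι] (w : V → ℕ) (C : ι → Set V) (i₀ : ι) (x : V) :
    ℕ :=
  if x ∈ C i₀ then Fintype.card ι * w x else w x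

/-- Symmetric branches at `v`, with the symmetries normalised to involutions. -/
structure IsSymmetricBranchFamily (G : SimpleGraph V) (w : V → ℕ) (v : V) (i₀ : ι)
    (C : ι → Set V) (τ : ι → G ≃g G) : Prop where
  pairwise_disjoint : Pairwise fun i j => Disjoint (C i) (C j)
  vertex_notMem : ∀ i, v ∉ C i
  mem_of_adj : ∀ i ⦃x y⦄, x ∈ C i → G.Adj x y → y ≠ v → y ∈ C i
  involutive : ∀ i, Function.Involutive (τ i)
  image_base : ∀ i, τ i '' C i₀ = C i
  apply_eq_self : ∀ i x, x ∉ C i₀ → x ∉ C i → τ i x = x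
  apply_base : ∀ x, τ i₀ x = x
  weight_apply : ∀ i x, w (τ i x) = w x

open Classical in
noncomputable def foldBranches (C : ι → Set V) (τ : ι → G ≃g G) (x : V) : V :=
  if h : ∃ i, x ∈ C i then τ h.choose x else x

theorem foldBranches_eq_self {x : V} (hx : ∀ i, x ∉ C i) : foldBranches C τ x = x := by
  rw [foldBranches, dif_neg (not_exists.mpr hx)]

open Classical in
/-- The `w'`-weight of the part of `τ j '' B` lying in `T'`. -/
noncomputable def traceWeight [Fintype ι] (w : V → ℕ) (C : ι → Set V) (i₀ : ι)
    (τ : ι → G ≃g G) (B : Finset V) (j : ι) : ℕ :=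
  ∑ x ∈ (B.image (τ j)).filter (· ∈ concentrationCore C i₀), concentratedWeight w C i₀ x

namespace IsSymmetricBranchFamily

variable {x : V} {i j k : ι}

theorem eq_of_mem (h : IsSymmetricBranchFamily G w v i₀ C τ) (hi : x ∈ C i) (hj : x ∈ C j) :
    i = j :=
  by_contra fun hij => Set.disjoint_left.mp (h.pairwise_disjoint hij) hi hj

theorem mem_core_of_mem_base (h : IsSymmetricBranchFamily G w v i₀ C τ) (hx : x ∈ C i₀) :
    x ∈ concentrationCore C i₀ :=
  fun _ hi hxi => hi (h.eq_of_mem hxi hx)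

theorem vertex_mem_core (h : IsSymmetricBranchFamily G w v i₀ C τ) :
    v ∈ concentrationCore C i₀ :=
  fun i _ => h.vertex_notMem i

theorem eq_vertex_of_adj (h : IsSymmetricBranchFamily G w v i₀ C τ) ⦃x y : V⦄
    (hx : x ∉ concentrationCore C i₀) (hxy : G.Adj x y) (hy : y ∈ concentrationCore C i₀) :
    y = v := by
  obtain ⟨i, hi, hxi⟩ : ∃ i, i ≠ i₀ ∧ x ∈ C i := by simpa [concentrationCore] using hx
  by_contra hyv
  exact hy i hi (h.mem_of_adj i hxi hxy hyv)

theorem apply_mem_of_mem_base (h : IsSymmetricBranchFamily G w v i₀ C τ) (hx : x ∈ C i₀)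
    (i : ι) : τ i x ∈ C i :=
  h.image_base i ▸ Set.mem_image_of_mem _ hx

theorem apply_mem_base_of_mem (h : IsSymmetricBranchFamily G w v i₀ C τ) (hx : x ∈ C i) :
    τ i x ∈ C i₀ := by
  obtain ⟨y, hy, rfl⟩ := h.image_base i ▸ hx
  rwa [h.involutive i y]

theorem apply_eq_self_of_mem (h : IsSymmetricBranchFamily G w v i₀ C τ) (hx : x ∈ C i)
    (hi : i ≠ i₀) (hk : k ≠ i) : τ k x = x :=
  h.apply_eq_self k x (fun hx₀ => hi (h.eq_of_mem hx hx₀)) fun hxk => hk (h.eq_of_mem hxk hx)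

theorem apply_eq_self_of_forall (h : IsSymmetricBranchFamily G w v i₀ C τ)
    (hx : ∀ i, x ∉ C i) (k : ι) : τ k x = x :=
  h.apply_eq_self k x (hx i₀) (hx k)

theorem apply_vertex (h : IsSymmetricBranchFamily G w v i₀ C τ) (k : ι) : τ k v = v :=
  h.apply_eq_self_of_forall h.vertex_notMem k

theorem apply_mem_core_iff (h : IsSymmetricBranchFamily G w v i₀ C τ) (hx : x ∈ C i) :
    τ j x ∈ concentrationCore C i₀ ↔ j = i := by
  refine ⟨fun hj => by_contra fun hji => ?_, fun hji => ?_⟩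
  · by_cases hi : i = i₀
    · subst hi
      exact hj j hji (h.apply_mem_of_mem_base hx j)
    · exact hj i hi (by rwa [h.apply_eq_self_of_mem hx hi hji])
  · exact h.mem_core_of_mem_base (hji ▸ h.apply_mem_base_of_mem hx)

theorem foldBranches_eq_of_mem (h : IsSymmetricBranchFamily G w v i₀ C τ) (hx : x ∈ C i) :
    foldBranches C τ x = τ i x := by
  have hex : ∃ i, x ∈ C i := ⟨i, hx⟩
  rw [foldBranches, dif_pos hex, h.eq_of_mem hex.choose_spec hx]

theorem exists_foldBranches_eq (h : IsSymmetricBranchFamily G w v i₀ C τ) (x : V) :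
    ∃ i, foldBranches C τ x = τ i x := by
  by_cases hx : ∃ i, x ∈ C i
  · obtain ⟨i, hi⟩ := hx
    exact ⟨i, h.foldBranches_eq_of_mem hi⟩
  · exact ⟨i₀, by rw [foldBranches_eq_self (not_exists.mp hx), h.apply_base]⟩

theorem foldBranches_mem_core (h : IsSymmetricBranchFamily G w v i₀ C τ) (x : V) :
    foldBranches C τ x ∈ concentrationCore C i₀ := by
  by_cases hx : ∃ i, x ∈ C i
  · obtain ⟨i, hi⟩ := hx
    rw [h.foldBranches_eq_of_mem hi]
    exact (h.apply_mem_core_iff hi).mpr rfl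
  · rw [foldBranches_eq_self (not_exists.mp hx)]
    exact fun i _ => not_exists.mp hx i

theorem foldBranches_of_mem_core (h : IsSymmetricBranchFamily G w v i₀ C τ)
    (hx : x ∈ concentrationCore C i₀) : foldBranches C τ x = x := by
  by_cases hx' : ∃ i, x ∈ C i
  · obtain ⟨i, hi⟩ := hx'
    obtain rfl : i = i₀ := ((h.apply_mem_core_iff hi).mp (by rwa [h.apply_base])).symm
    rw [h.foldBranches_eq_of_mem hi, h.apply_base]
  · exact foldBranches_eq_self (not_exists.mp hx')

theorem foldBranches_apply (h : IsSymmetricBranchFamily G w v i₀ C τ) (k : ι) (x : V) :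
    foldBranches C τ (τ k x) = foldBranches C τ x := by
  by_cases hx : ∃ i, x ∈ C i
  · obtain ⟨i, hi⟩ := hx
    rw [h.foldBranches_eq_of_mem hi]
    by_cases hki : k = i
    · subst hki
      rw [h.foldBranches_eq_of_mem (h.apply_mem_base_of_mem hi), h.apply_base]
    by_cases hi₀ : i = i₀
    · subst hi₀
      rw [h.foldBranches_eq_of_mem (h.apply_mem_of_mem_base hi k), h.involutive, h.apply_base]
    · rw [h.apply_eq_self_of_mem hi hi₀ hki, h.foldBranches_eq_of_mem hi]
  · rw [h.apply_eq_self_of_forall (not_exists.mp hx)]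

theorem image_image_apply (h : IsSymmetricBranchFamily G w v i₀ C τ) (k : ι) (A : Set V) :
    τ k '' (τ k '' A) = A := by
  rw [← Set.image_comp, (h.involutive k).comp_self, Set.image_id]

theorem image_preimage_foldBranches (h : IsSymmetricBranchFamily G w v i₀ C τ) (k : ι)
    (A : Set V) : τ k '' (foldBranches C τ ⁻¹' A) = foldBranches C τ ⁻¹' A := by
  ext x
  constructor
  · rintro ⟨y, hy, rfl⟩
    rwa [Set.mem_preimage, h.foldBranches_apply]
  · intro hx
    exact ⟨τ k x, by rwa [Set.mem_preimage, h.foldBranches_apply], h.involutive k x⟩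

/-- For a blue set invariant under all `τ k`, the PSD process on `G` is the process on the
concentration, copied into every branch. -/
theorem psdStep_iterate_eq_univ_iff (h : IsSymmetricBranchFamily G w v i₀ C τ) {B : Set V}
    (hB : ∀ k, τ k '' B = B) (t : ℕ) :
    (psdStep G)^[t] B = Set.univ ↔
      (psdStep (G.induce (concentrationCore C i₀)))^[t] (Subtype.val ⁻¹' B) = Set.univ := by
  have hX (k : ι) (s : ℕ) : τ k '' (psdStep G)^[s] B = (psdStep G)^[s] B := by
    rw [← psdStep_iterate_image, hB]
  have hF : ForcedFromWithin G B (concentrationCore C i₀) v := by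
    intro s u hu
    obtain ⟨i, hi⟩ := h.exists_foldBranches_eq u
    refine ⟨τ i u, hi ▸ h.foldBranches_mem_core u, ?_⟩
    simpa only [hX, h.apply_vertex] using hu.image (τ i)
  rw [← preimage_psdStep_iterate h.eq_vertex_of_adj h.vertex_mem_core hF]
  refine ⟨fun ht => by rw [ht, Set.preimage_univ], fun ht => Set.eq_univ_of_forall fun x => ?_⟩
  obtain ⟨i, hi⟩ := h.exists_foldBranches_eq x
  have hfold : τ i x ∈ (psdStep G)^[t] B := by
    rw [← hi]
    exact (Set.ext_iff.mp ht ⟨_, h.foldBranches_mem_core x⟩).mpr trivial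
  rw [← hX i]
  exact ⟨τ i x, hfold, h.involutive i x⟩

theorem foldBranches_eq_iff (h : IsSymmetricBranchFamily G w v i₀ C τ) {x y : V}
    (hy : y ∈ concentrationCore C i₀) : foldBranches C τ x = y ↔ ∃ i, τ i y = x := by
  constructor
  · rintro rfl
    obtain ⟨i, hi⟩ := h.exists_foldBranches_eq x
    exact ⟨i, by rw [hi, h.involutive]⟩
  · rintro ⟨i, rfl⟩
    rw [h.foldBranches_apply, h.foldBranches_of_mem_core hy]

theorem sum_image_apply [DecidableEq V] [Fintype ι] (h : IsSymmetricBranchFamily G w v i₀ C τ)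
    {y : V} (hy : y ∈ concentrationCore C i₀) :
    ∑ x ∈ Finset.univ.image (fun i => τ i y), w x = concentratedWeight w C i₀ y := by
  by_cases hy₀ : y ∈ C i₀
  · have hinj : Set.InjOn (fun i => τ i y) ↑(Finset.univ : Finset ι) := fun i _ j _ hij =>
      h.eq_of_mem (h.apply_mem_of_mem_base hy₀ i) (by
        rw [show τ i y = τ j y from hij]; exact h.apply_mem_of_mem_base hy₀ j)
    simp [Finset.sum_image hinj, h.weight_apply, concentratedWeight, hy₀]
  · have hfix (i : ι) : τ i y = y := h.apply_eq_self i y hy₀ fun hyi =>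
      hy i (fun hi => hy₀ (hi ▸ hyi)) hyi
    simp [hfix, Finset.image_const ⟨i₀, Finset.mem_univ _⟩, concentratedWeight, hy₀]

theorem sum_concentratedWeight_apply [Fintype ι] (h : IsSymmetricBranchFamily G w v i₀ C τ)
    [DecidablePred (· ∈ concentrationCore C i₀)] (x : V) :
    ∑ j, (if τ j x ∈ concentrationCore C i₀ then concentratedWeight w C i₀ (τ j x) else 0) =
      Fintype.card ι * w x := by
  classical
  by_cases hx : ∃ i, x ∈ C i
  · obtain ⟨i, hi⟩ := hx
    simp only [h.apply_mem_core_iff hi, Finset.sum_ite_eq', Finset.mem_univ, if_true,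
      concentratedWeight, if_pos (h.apply_mem_base_of_mem hi), h.weight_apply]
  · have hfix := h.apply_eq_self_of_forall (not_exists.mp hx)
    have hcore : x ∈ concentrationCore C i₀ := fun i _ => not_exists.mp hx i
    simp [hfix, hcore, concentratedWeight, not_exists.mp hx i₀]

theorem sum_traceWeight [Fintype ι] (h : IsSymmetricBranchFamily G w v i₀ C τ)
    (B : Finset V) : ∑ j, traceWeight w C i₀ τ B j = Fintype.card ι * ∑ x ∈ B, w x := by
  classical
  simp only [traceWeight, Finset.sum_filter]
  simp only [Finset.sum_image fun x _ y _ hxy => (τ _).injective hxy]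
  rw [Finset.sum_comm, Finset.mul_sum]
  exact Finset.sum_congr rfl fun x _ => h.sum_concentratedWeight_apply x

theorem exists_forcedFromWithin_image (h : IsSymmetricBranchFamily G w v i₀ C τ) (B : Set V) :
    ∃ j, ForcedFromWithin G (τ j '' B) (concentrationCore C i₀) v := by
  have pull {j : ι} {t : ℕ} {u : V} (hu : psdForces G ((psdStep G)^[t] (τ j '' B)) u v) :
      psdForces G ((psdStep G)^[t] B) (τ j u) v := by
    simpa only [psdStep_iterate_image, h.image_image_apply, h.apply_vertex] using hu.image (τ j)
  by_cases hex : ∃ t u, psdForces G ((psdStep G)^[t] B) u v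
  · obtain ⟨t₀, u₀, hu₀⟩ := hex
    obtain ⟨j, hj⟩ := h.exists_foldBranches_eq u₀
    refine ⟨j, fun t u hu => ⟨τ j u₀, hj ▸ h.foldBranches_mem_core u₀, ?_⟩⟩
    obtain rfl := psdForces_iterate_unique hu₀ (pull hu)
    simpa only [psdStep_iterate_image, h.apply_vertex] using hu₀.image (τ j)
  · exact ⟨i₀, fun t u hu => absurd ⟨t, _, pull hu⟩ hex⟩

theorem psdThW_le_psdThW_induce [Fintype V] [Fintype ι]
    (h : IsSymmetricBranchFamily G w v i₀ C τ) :
    psdThW G w ≤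
      psdThW (G.induce (concentrationCore C i₀)) (fun x => concentratedWeight w C i₀ x) := by
  classical
  obtain ⟨B', hB', hth⟩ := exists_eq_psdThW (G.induce (concentrationCore C i₀))
    (fun x => concentratedWeight w C i₀ x)
  let B : Finset V := B'.biUnion fun y => Finset.univ.image fun i => τ i y
  have hmem (x : V) : x ∈ B ↔ ∃ y ∈ B', foldBranches C τ x = y := by
    simp only [B, Finset.mem_biUnion, Finset.mem_univ, Finset.mem_image, true_and,
      h.foldBranches_eq_iff (Subtype.prop _)]
  have hB : (↑B : Set V) =
      foldBranches C τ ⁻¹' (Subtype.val '' (↑B' : Set (concentrationCore C i₀))) := by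
    ext x
    simp [hmem]
  have hpre : (Subtype.val ⁻¹' (↑B : Set V) : Set (concentrationCore C i₀)) = ↑B' := by
    ext y
    simp [hmem, h.foldBranches_of_mem_core y.2]
  have hiff := h.psdStep_iterate_eq_univ_iff (B := ↑B) fun k => by
    rw [hB, h.image_preimage_foldBranches]
  rw [hpre] at hiff
  have hforcing := (hiff _).mpr (psdStep_iterate_psdPt hB')
  have hdisj : Set.PairwiseDisjoint ↑B' fun y : concentrationCore C i₀ =>
      Finset.univ.image fun i => τ i y := by
    intro y _ y' _ hyy'
    refine Finset.disjoint_left.mpr fun x hx hx' => hyy' (Subtype.ext ?_)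
    simp only [Finset.mem_image, Finset.mem_univ, true_and] at hx hx'
    rw [← (h.foldBranches_eq_iff y.2).mpr hx, ← (h.foldBranches_eq_iff y'.2).mpr hx']
  have hweight : ∑ x ∈ B, w x = ∑ y ∈ B', concentratedWeight w C i₀ y := by
    rw [Finset.sum_biUnion hdisj]
    exact Finset.sum_congr rfl fun y _ => h.sum_image_apply y.2
  calc psdThW G w ≤ ∑ x ∈ B, w x + psdPt G ↑B := psdThW_le w ⟨_, hforcing⟩
    _ ≤ ∑ y ∈ B', concentratedWeight w C i₀ y + psdPt (G.induce (concentrationCore C i₀)) ↑B' :=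
        hweight ▸ Nat.add_le_add_left (psdPt_le hforcing) _
    _ = _ := hth.symm

theorem psdThW_induce_le_traceWeight_add [Fintype V] [Fintype ι]
    (h : IsSymmetricBranchFamily G w v i₀ C τ) {B : Finset V} (hB : IsPSDForcing G ↑B)
    (j : ι) :
    psdThW (G.induce (concentrationCore C i₀)) (fun x => concentratedWeight w C i₀ x) ≤
      traceWeight w C i₀ τ B j + w v + psdPt G ↑B := by
  classical
  let D := insert v (B.image (τ j))
  have hsub : (↑(B.image (τ j)) : Set V) ⊆ ↑D := by
    simp only [D, Finset.coe_insert]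
    exact Set.subset_insert _ _
  have himage : IsPSDForcing G ↑(B.image (τ j)) := by
    rwa [Finset.coe_image, isPSDForcing_image_iff]
  have hweight : ∑ x ∈ D.filter (· ∈ concentrationCore C i₀), concentratedWeight w C i₀ x ≤
      traceWeight w C i₀ τ B j + w v := by
    rw [Finset.filter_insert, if_pos h.vertex_mem_core, traceWeight]
    by_cases hvD : v ∈ (B.image (τ j)).filter (· ∈ concentrationCore C i₀)
    · rw [Finset.insert_eq_of_mem hvD]
      exact Nat.le_add_right _ _
    · rw [Finset.sum_insert hvD, add_comm, concentratedWeight, if_neg (h.vertex_notMem i₀)]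
  calc psdThW (G.induce (concentrationCore C i₀)) (fun x => concentratedWeight w C i₀ x)
      ≤ ∑ x ∈ D.filter (· ∈ concentrationCore C i₀), concentratedWeight w C i₀ x +
          psdPt G ↑D :=
        psdThW_induce_le h.eq_vertex_of_adj h.vertex_mem_core _ (himage.mono hsub)
          (forcedFromWithin_of_mem (Finset.mem_insert_self v _))
    _ ≤ traceWeight w C i₀ τ B j + w v + psdPt G ↑B := by
        refine Nat.add_le_add hweight ((psdPt_anti hsub himage).trans_eq ?_)
        rw [Finset.coe_image, psdPt_image]

theorem psdThW_induce_le_traceWeight [Fintype V] [Fintype ι]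
    (h : IsSymmetricBranchFamily G w v i₀ C τ) {B : Finset V} (hB : IsPSDForcing G ↑B) {j : ι}
    (hj : ForcedFromWithin G (τ j '' ↑B) (concentrationCore C i₀) v) :
    psdThW (G.induce (concentrationCore C i₀)) (fun x => concentratedWeight w C i₀ x) ≤
      traceWeight w C i₀ τ B j + psdPt G ↑B := by
  classical
  rw [← Finset.coe_image] at hj
  have himage : IsPSDForcing G ↑(B.image (τ j)) := by
    rwa [Finset.coe_image, isPSDForcing_image_iff]
  calc psdThW (G.induce (concentrationCore C i₀)) (fun x => concentratedWeight w C i₀ x)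
      ≤ traceWeight w C i₀ τ B j + psdPt G ↑(B.image (τ j)) :=
        psdThW_induce_le h.eq_vertex_of_adj h.vertex_mem_core _ himage hj
    _ = traceWeight w C i₀ τ B j + psdPt G ↑B := by rw [Finset.coe_image, psdPt_image]

/-- The trace weights of an optimal `B` average to `w B`. If one is below average there is room
to add `v`; otherwise all are equal and `j` can be chosen so that `v` is forced from within the
concentration. -/
theorem psdThW_induce_le_psdThW [Fintype V] [Fintype ι]
    (h : IsSymmetricBranchFamily G w v i₀ C τ) (hv : w v ≤ 1) :
    psdThW (G.induce (concentrationCore C i₀)) (fun x => concentratedWeight w C i₀ x) ≤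
      psdThW G w := by
  obtain ⟨B, hB, hth⟩ := exists_eq_psdThW G w
  rw [hth]
  by_cases hlt : ∃ j, traceWeight w C i₀ τ B j < ∑ x ∈ B, w x
  · obtain ⟨j, hj⟩ := hlt
    have := h.psdThW_induce_le_traceWeight_add hB j
    omega
  · simp only [not_exists, not_lt] at hlt
    have hsum := h.sum_traceWeight B
    rw [← smul_eq_mul, ← Finset.card_univ, ← Finset.sum_const] at hsum
    obtain ⟨j, hj⟩ := h.exists_forcedFromWithin_image ↑B
    have hj_eq := (Finset.sum_eq_sum_iff_of_le fun j _ => hlt j).mp hsum.symm j (Finset.mem_univ j)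
    exact (h.psdThW_induce_le_traceWeight hB hj).trans_eq (by rw [← hj_eq])

end IsSymmetricBranchFamily

theorem exists_isSymmetricBranchFamily {σ : ι → G ≃g G}
    (hbranch : ∀ i, IsBranch G v (C i)) (hinj : Function.Injective C)
    (hσ : ∀ i, i ≠ i₀ → IsSymmetryMap G w (C i₀) (C i) (σ i)) :
    ∃ τ, IsSymmetricBranchFamily G w v i₀ C τ := by
  have hdisj : Pairwise fun i j => Disjoint (C i) (C j) := fun i j hij =>
    (hbranch i).disjoint (hbranch j) (hinj.ne hij)
  have hswap (i : ι) : ∃ φ : G ≃g G, Function.Involutive φ ∧ φ '' C i₀ = C i ∧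
      (∀ x, x ∉ C i₀ → x ∉ C i → φ x = x) ∧ (∀ x, w (φ x) = w x) ∧
      (i = i₀ → ∀ x, φ x = x) := by
    by_cases hi : i = i₀
    · subst hi
      exact ⟨RelIso.refl _, fun _ => rfl, Set.image_id _, fun _ _ _ => rfl, fun _ => rfl,
        fun _ _ => rfl⟩
    · have hnadj : ∀ x ∈ C i₀, ∀ y ∈ C i, ¬G.Adj x y := fun x hx y hy hxy =>
        Set.disjoint_left.mp (hdisj (Ne.symm hi))
          ((hbranch i₀).mem_of_adj hx hxy fun hyv => (hbranch i).vertex_notMem (hyv ▸ hy)) hy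
      obtain ⟨φ, hφ⟩ := (hσ i hi).exists_involutive (hdisj (Ne.symm hi)) hnadj
      exact ⟨φ, hφ.1, hφ.2.1, hφ.2.2.1, hφ.2.2.2, fun h => absurd h hi⟩
  choose τ hinv himage hfix hweight hbase using hswap
  exact ⟨τ, ⟨hdisj, fun i => (hbranch i).vertex_notMem,
    fun i _ _ hx hxy hy => (hbranch i).mem_of_adj hx hxy hy, hinv, himage, hfix,
    hbase i₀ rfl, hweight⟩⟩

end Concentration

open Classical in
theorem stmt4_general {V : Type*} [Fintype V] (T : SimpleGraph V)
    (w : V → ℕ) (v : V) (hv : w v = 1)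
    (m : ℕ) (hm : 0 < m) (C : Fin m → Set V)
    (hbranch : ∀ i, IsBranch T v (C i)) (hinj : Function.Injective C)
    (σ : Fin m → (T ≃g T))
    (hσ : ∀ i, i ≠ ⟨0, hm⟩ → IsSymmetryMap T w (C ⟨0, hm⟩) (C i) (σ i)) :
    psdThW T w =
      psdThW (T.induce {x : V | ∀ i, i ≠ ⟨0, hm⟩ → x ∉ C i})
        (fun x => if (x : V) ∈ C ⟨0, hm⟩ then m * w x else w x) := by
  obtain ⟨τ, hτ⟩ := exists_isSymmetricBranchFamily hbranch hinj hσ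
  have h := le_antisymm hτ.psdThW_le_psdThW_induce (hτ.psdThW_induce_le_psdThW hv.le)
  simp only [concentratedWeight, Fintype.card_fin] at h
  exact h

open Classical in
/-- Concentration preserves the weighted PSD-throttling number: if `(T,w)` is a
positive-integer weighted finite tree, `w(v) = 1`, and `C 0, …, C (m-1)` is a maximal set of
pairwise symmetric branches of `T` at `v`, then the single concentration
`T' = T - (C 1 ∪ ⋯ ∪ C (m-1))` with weights multiplied by `m` on `C 0` satisfies
`th₊(T,w) = th₊(T',w')`. -/
theorem stmt4 {V : Type*} [Fintype V] [DecidableEq V] (T : SimpleGraph V) (hT : T.IsTree)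
    (w : V → ℕ) (hw : ∀ x, 0 < w x) (v : V) (hv : w v = 1)
    (m : ℕ) (hm : 0 < m) (C : Fin m → Set V)
    (hbranch : ∀ i, IsBranch T v (C i)) (hinj : Function.Injective C)
    (σ : Fin m → (T ≃g T))
    (hσ : ∀ i, i ≠ ⟨0, hm⟩ → IsSymmetryMap T w (C ⟨0, hm⟩) (C i) (σ i))
    (hmax : ∀ D : Set V, IsBranch T v D →
      (∃ τ : T ≃g T, IsSymmetryMap T w (C ⟨0, hm⟩) D τ) → ∃ i, D = C i) :
    psdThW T w =
      psdThW (T.induce {x : V | ∀ i, i ≠ ⟨0, hm⟩ → x ∉ C i})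
        (fun x => if (x : V) ∈ C ⟨0, hm⟩ then m * w x else w x) :=
  stmt4_general T w v hv m hm C hbranch hinj σ hσ
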